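/- The set of positive real numbers t that are units of the ring R = ℤ[1/5] + ℤ[1/5]√3 (i.e., t ∈ R and t⁻¹ ∈ R) is exactly {5^n (2 + √3)^m : n, m ∈ ℤ}. -/
import Mathlib

/-- `ℤ[1/5]`, as a subset of `ℝ`: rationals of the form `m / 5^i` with `m, i ∈ ℤ`. -/
def ZOneFifth : Set ℝ :=
  {r : ℝ | ∃ m i : ℤ, r = (m : ℝ) / (5 : ℝ) ^ i}

/-- The subring `R = ℤ[1/5] + ℤ[1/5]√3` of `ℝ`. -/
def Rring : Set ℝ :=
  {r : ℝ | ∃ a b : ℝ, a ∈ ZOneFifth ∧ b ∈ ZOneFifth ∧ r = a + b * Real.sqrt 3}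

namespace Stmt6Aux

lemma sqrt3_nonneg : (0:ℝ) ≤ Real.sqrt 3 := Real.sqrt_nonneg 3

lemma sqrt3_sq : Real.sqrt 3 * Real.sqrt 3 = 3 := Real.mul_self_sqrt (by norm_num)

lemma sqrt3_irr : Irrational (Real.sqrt 3) := by
  have := Nat.prime_three.irrational_sqrt
  simpa using this

/-- Uniqueness of representation `p + q √3` with integer coefficients. -/
lemma rep_eq {p q r s : ℤ} (h : (p:ℝ) + q * Real.sqrt 3 = r + s * Real.sqrt 3) :
    p = r ∧ q = s := by
  by_cases hqs : q = s
  · subst hqs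
    have : (p:ℝ) = r := by linarith
    exact ⟨by exact_mod_cast this, rfl⟩
  · exfalso
    have hne : ((s:ℝ) - q) ≠ 0 := by
      intro hh
      exact hqs (by exact_mod_cast (sub_eq_zero.mp hh).symm)
    have hval : Real.sqrt 3 = ((p:ℝ) - r) / ((s:ℝ) - q) := by
      rw [eq_div_iff hne]; linarith
    have : Real.sqrt 3 = ((((p : ℚ) - r) / ((s : ℚ) - q) : ℚ) : ℝ) := by
      rw [hval]; push_cast; ring
    exact (Rat.not_irrational _) (this ▸ sqrt3_irr)

lemma five_dvd {A B : ℤ} (h : (5:ℤ) ∣ A^2 - 3*B^2) : 5 ∣ A ∧ 5 ∣ B := by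
  have key : ∀ x y : ZMod 5, x^2 - 3*y^2 = 0 → x = 0 ∧ y = 0 := by decide
  have h0 : ((A:ZMod 5))^2 - 3*(B:ZMod 5)^2 = 0 := by
    have := (ZMod.intCast_zmod_eq_zero_iff_dvd (A^2 - 3*B^2) 5).mpr h
    push_cast at this
    linear_combination this
  obtain ⟨h1, h2⟩ := key _ _ h0
  exact ⟨(ZMod.intCast_zmod_eq_zero_iff_dvd _ 5).mp h1,
    (ZMod.intCast_zmod_eq_zero_iff_dvd _ 5).mp h2⟩

lemma no_neg : ∀ j : ℕ, ∀ A B : ℤ, A^2 - 3*B^2 ≠ -5^j := by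
  intro j
  induction j using Nat.strong_induction_on with
  | _ j ih =>
    intro A B h
    match j, ih with
    | 0, _ =>
      have key : ∀ x y : ZMod 3, x^2 - 3*y^2 ≠ -1 := by decide
      apply key (A : ZMod 3) (B : ZMod 3)
      have : ((A^2 - 3*B^2 : ℤ) : ZMod 3) = ((-5^0 : ℤ) : ZMod 3) := by rw [h]
      push_cast at this
      linear_combination this
    | 1, _ =>
      obtain ⟨⟨a, rfl⟩, ⟨b, rfl⟩⟩ := five_dvd ⟨-1, by rw [h]; ring⟩
      have h25 : (25:ℤ) * (a^2 - 3*b^2) = -5 := by linear_combination h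
      omega
    | (j+2), ih =>
      obtain ⟨⟨a, rfl⟩, ⟨b, rfl⟩⟩ := five_dvd ⟨-5^(j+1), by rw [h]; ring⟩
      apply ih j (by omega) a b
      have h25 : (25:ℤ) * (a^2 - 3*b^2) = 25 * (-5^j) := by linear_combination h
      exact mul_left_cancel₀ (by norm_num : (25:ℤ) ≠ 0) h25

lemma descent : ∀ j : ℕ, ∀ A B : ℤ, A^2 - 3*B^2 = 5^j →
    ∃ (e : ℕ) (C D : ℤ), j = 2*e ∧ A = 5^e * C ∧ B = 5^e * D ∧ C^2 - 3*D^2 = 1 := by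
  intro j
  induction j using Nat.strong_induction_on with
  | _ j ih =>
    intro A B h
    match j, ih with
    | 0, _ => exact ⟨0, A, B, rfl, by ring, by ring, by simpa using h⟩
    | 1, _ =>
      exfalso
      obtain ⟨⟨a, rfl⟩, ⟨b, rfl⟩⟩ := five_dvd ⟨1, by rw [h]; ring⟩
      have h25 : (25:ℤ) * (a^2 - 3*b^2) = 5 := by linear_combination h
      omega
    | (j+2), ih =>
      obtain ⟨⟨a, rfl⟩, ⟨b, rfl⟩⟩ := five_dvd ⟨5^(j+1), by rw [h]; ring⟩
      have h' : a^2 - 3*b^2 = 5^j := by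
        have h25 : (25:ℤ) * (a^2 - 3*b^2) = 25 * 5^j := by linear_combination h
        exact mul_left_cancel₀ (by norm_num : (25:ℤ) ≠ 0) h25
      obtain ⟨e, C, D, he, hA, hB, hn⟩ := ih j (by omega) a b h'
      exact ⟨e+1, C, D, by omega, by rw [hA]; ring, by rw [hB]; ring, hn⟩

lemma eq_pow_of_mul_eq_pow {N M : ℤ} {k : ℕ} (h : N * M = 5^k) :
    ∃ j : ℕ, N = 5^j ∨ N = -5^j := by
  have hdvd : N ∣ (5:ℤ)^k := ⟨M, h.symm⟩
  have hdvd' : N.natAbs ∣ 5^k := by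
    have := Int.natAbs_dvd_natAbs.mpr hdvd
    simpa [Int.natAbs_pow] using this
  obtain ⟨j, _, hval⟩ := (Nat.dvd_prime_pow (by norm_num : Nat.Prime 5)).mp hdvd'
  refine ⟨j, ?_⟩
  rcases Int.natAbs_eq N with hN | hN
  · left; rw [hN, hval]; push_cast; ring
  · right; rw [hN, hval]; push_cast; ring

/-- Classification of nonnegative-`D` solutions of the Pell equation `C² - 3D² = 1`. -/
lemma pell_nat : ∀ n : ℕ, ∀ C D : ℤ, 0 < C → 0 ≤ D → D ≤ n → C^2 - 3*D^2 = 1 →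
    ∃ m : ℕ, (C:ℝ) + (D:ℝ) * Real.sqrt 3 = (2 + Real.sqrt 3)^m := by
  intro n
  induction n with
  | zero =>
    intro C D hC hD hDn h
    have hD0 : D = 0 := by omega
    subst hD0
    have : C = 1 := by nlinarith
    exact ⟨0, by simp [this]⟩
  | succ n ih =>
    intro C D hC hD hDn h
    rcases eq_or_lt_of_le hD with hD0 | hDpos
    · have hD0 : D = 0 := hD0.symm
      subst hD0
      have : C = 1 := by nlinarith
      exact ⟨0, by simp [this]⟩
    · have hCD : D < C := by nlinarith
      have hC2D : C ≤ 2*D := by nlinarith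
      have h3D : 3*D < 2*C := by nlinarith
      have hnorm' : (2*C - 3*D)^2 - 3*(2*D - C)^2 = 1 := by linear_combination h
      obtain ⟨m, hm⟩ := ih (2*C - 3*D) (2*D - C) (by omega) (by omega) (by omega) hnorm'
      refine ⟨m + 1, ?_⟩
      have hexp : (C:ℝ) + (D:ℝ) * Real.sqrt 3
          = (2 + Real.sqrt 3) * (((2*C - 3*D : ℤ):ℝ) + ((2*D - C : ℤ):ℝ) * Real.sqrt 3) := by
        push_cast
        linear_combination ((C:ℝ) - 2*(D:ℝ)) * sqrt3_sq
      rw [hexp, hm, pow_succ]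
      ring
  
lemma pell_classify (C D : ℤ) (h : C^2 - 3*D^2 = 1)
    (hpos : 0 < (C:ℝ) + (D:ℝ) * Real.sqrt 3) :
    ∃ m : ℤ, (C:ℝ) + (D:ℝ) * Real.sqrt 3 = (2 + Real.sqrt 3)^m := by
  have hcast : ((C:ℝ))^2 - 3*((D:ℝ))^2 = 1 := by exact_mod_cast h
  have hmul : ((C:ℝ) + D * Real.sqrt 3) * ((C:ℝ) - D * Real.sqrt 3) = 1 := by
    linear_combination hcast - (D:ℝ)^2 * sqrt3_sq
  have hconj : 0 < (C:ℝ) - D * Real.sqrt 3 := by nlinarith [hpos, hmul]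
  have hCpos : 0 < C := by
    have : 0 < (C:ℝ) := by nlinarith
    exact_mod_cast this
  rcases le_or_gt 0 D with hD | hD
  · obtain ⟨m, hm⟩ := pell_nat D.toNat C D hCpos hD (Int.self_le_toNat D) h
    exact ⟨(m:ℤ), by rw [hm, zpow_natCast]⟩
  · have hnorm' : C^2 - 3*(-D)^2 = 1 := by linear_combination h
    obtain ⟨m, hm⟩ := pell_nat (-D).toNat C (-D) hCpos (by omega) (Int.self_le_toNat (-D)) hnorm'
    refine ⟨-(m:ℤ), ?_⟩
    have hm' : (C:ℝ) - D * Real.sqrt 3 = (2 + Real.sqrt 3)^m := by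
      push_cast at hm
      linarith
    rw [zpow_neg, zpow_natCast, ← hm']
    exact eq_inv_of_mul_eq_one_right (by linear_combination hmul)

lemma pow_rep (k : ℕ) : ∃ P Q : ℤ, ((2:ℝ) + Real.sqrt 3)^k = P + Q * Real.sqrt 3 ∧
    ((2:ℝ) - Real.sqrt 3)^k = P - Q * Real.sqrt 3 := by
  induction k with
  | zero => exact ⟨1, 0, by simp, by simp⟩
  | succ k ih =>
    obtain ⟨P, Q, h1, h2⟩ := ih
    refine ⟨2*P + 3*Q, P + 2*Q, ?_, ?_⟩
    · rw [pow_succ, h1]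
      push_cast
      linear_combination (Q:ℝ) * sqrt3_sq
    · rw [pow_succ, h2]
      push_cast
      linear_combination (Q:ℝ) * sqrt3_sq

lemma zpow_rep (m : ℤ) : ∃ P Q : ℤ, ((2:ℝ) + Real.sqrt 3)^m = P + Q * Real.sqrt 3 := by
  obtain ⟨P, Q, h1, h2⟩ := pow_rep m.natAbs
  rcases Int.natAbs_eq m with hm | hm
  · exact ⟨P, Q, by rw [hm, zpow_natCast, h1]⟩
  · refine ⟨P, -Q, ?_⟩
    have hunit : ((P:ℝ) + Q * Real.sqrt 3) * ((P:ℝ) - Q * Real.sqrt 3) = 1 := by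
      rw [← h1, ← h2, ← mul_pow]
      have : ((2:ℝ) + Real.sqrt 3) * (2 - Real.sqrt 3) = 1 := by nlinarith [sqrt3_sq]
      rw [this, one_pow]
    rw [hm, zpow_neg, zpow_natCast, h1, inv_eq_of_mul_eq_one_right hunit]
    push_cast
    ring

lemma mem_zof (P n : ℤ) : (5:ℝ)^n * (P:ℝ) ∈ ZOneFifth := by
  refine ⟨P, -n, ?_⟩
  rw [zpow_neg, div_eq_mul_inv, inv_inv, mul_comm]

lemma mem_R (n m : ℤ) : (5:ℝ)^n * (2 + Real.sqrt 3)^m ∈ Rring := by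
  obtain ⟨P, Q, h⟩ := zpow_rep m
  exact ⟨5^n * P, 5^n * Q, mem_zof P n, mem_zof Q n, by rw [h]; ring⟩

lemma zof_pow {x : ℝ} (hx : x ∈ ZOneFifth) : ∃ (A : ℤ) (e : ℕ), x * 5^e = (A:ℝ) := by
  obtain ⟨m, i, rfl⟩ := hx
  set k := ((i.toNat : ℤ) - i).toNat with hk
  have h1 : (k : ℤ) = (i.toNat : ℤ) - i := Int.toNat_of_nonneg (by omega)
  refine ⟨m * 5^k, i.toNat, ?_⟩
  have e1 : ((m * 5^k : ℤ) : ℝ) = (m:ℝ) * (5:ℝ)^((k:ℤ)) := by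
    push_cast
    rw [zpow_natCast]
  have e2 : ((5:ℝ)^(i.toNat : ℕ)) = (5:ℝ)^((i.toNat : ℤ)) := (zpow_natCast 5 i.toNat).symm
  rw [e1, e2, h1, zpow_sub₀ (by norm_num : (5:ℝ) ≠ 0)]
  ring

end Stmt6Aux

open Stmt6Aux in
/-- The set of positive real numbers `t` that are units of `R = ℤ[1/5] + ℤ[1/5]√3`
(i.e. `t ∈ R` and `t⁻¹ ∈ R`) equals `{5^n (2 + √3)^m : n, m ∈ ℤ}`. -/
theorem stmt_6 :
    {t : ℝ | 0 < t ∧ t ∈ Rring ∧ t⁻¹ ∈ Rring} =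
      {t : ℝ | ∃ n m : ℤ, t = (5 : ℝ) ^ n * (2 + Real.sqrt 3) ^ m} := by
  ext t
  simp only [Set.mem_setOf_eq]
  constructor
  · rintro ⟨ht, ⟨a, b, ha, hb, rfl⟩, ⟨c, d, hc, hd, hinv⟩⟩
    obtain ⟨A, eA, hA⟩ := zof_pow ha
    obtain ⟨B, eB, hB⟩ := zof_pow hb
    obtain ⟨C, eC, hC⟩ := zof_pow hc
    obtain ⟨D, eD, hD⟩ := zof_pow hd
    set N := max (max eA eB) (max eC eD) with hNdef
    have haN : a * 5^N = ((A * 5^(N - eA) : ℤ):ℝ) := by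
      push_cast
      rw [show (5:ℝ)^N = 5^eA * 5^(N - eA) by rw [← pow_add]; congr 1; omega,
        ← mul_assoc, hA]
    have hbN : b * 5^N = ((B * 5^(N - eB) : ℤ):ℝ) := by
      push_cast
      rw [show (5:ℝ)^N = 5^eB * 5^(N - eB) by rw [← pow_add]; congr 1; omega,
        ← mul_assoc, hB]
    have hcN : c * 5^N = ((C * 5^(N - eC) : ℤ):ℝ) := by
      push_cast
      rw [show (5:ℝ)^N = 5^eC * 5^(N - eC) by rw [← pow_add]; congr 1; omega,
        ← mul_assoc, hC]
    have hdN : d * 5^N = ((D * 5^(N - eD) : ℤ):ℝ) := by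
      push_cast
      rw [show (5:ℝ)^N = 5^eD * 5^(N - eD) by rw [← pow_add]; congr 1; omega,
        ← mul_assoc, hD]
    set A' : ℤ := A * 5^(N - eA)
    set B' : ℤ := B * 5^(N - eB)
    set C' : ℤ := C * 5^(N - eC)
    set D' : ℤ := D * 5^(N - eD)
    have htne : (a + b * Real.sqrt 3) ≠ 0 := ne_of_gt ht
    have hone : (a + b * Real.sqrt 3) * (c + d * Real.sqrt 3) = 1 := by
      rw [← hinv]; exact mul_inv_cancel₀ htne
    have hprod : ((A':ℝ) + (B':ℝ) * Real.sqrt 3) * ((C':ℝ) + (D':ℝ) * Real.sqrt 3)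
        = (5:ℝ)^(2*N) := by
      rw [← haN, ← hbN, ← hcN, ← hdN]
      have h2 : (5:ℝ)^(2*N) = 5^N * 5^N := by rw [two_mul, pow_add]
      rw [h2]
      calc (a * 5^N + b * 5^N * Real.sqrt 3) * (c * 5^N + d * 5^N * Real.sqrt 3)
          = ((a + b * Real.sqrt 3) * (c + d * Real.sqrt 3)) * ((5:ℝ)^N * 5^N) := by ring
        _ = 1 * ((5:ℝ)^N * 5^N) := by rw [hone]
        _ = (5:ℝ)^N * 5^N := by ring
    have hexp : ((A'*C' + 3*B'*D' : ℤ):ℝ) + ((A'*D' + B'*C' : ℤ):ℝ) * Real.sqrt 3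
        = ((5^(2*N) : ℤ):ℝ) + ((0:ℤ):ℝ) * Real.sqrt 3 := by
      push_cast
      linear_combination hprod - (B':ℝ) * (D':ℝ) * sqrt3_sq
    obtain ⟨hx, hy⟩ := rep_eq hexp
    have hNN : (A'^2 - 3*B'^2) * (C'^2 - 3*D'^2) = 5^(4*N) := by
      linear_combination (A'*C' + 3*B'*D' + 5^(2*N)) * hx - 3*(A'*D' + B'*C') * hy
    obtain ⟨j, hj | hj⟩ := eq_pow_of_mul_eq_pow hNN
    · obtain ⟨e, C₀, D₀, hje, hA', hB', hn⟩ := descent j A' B' hj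
      have hABval : (A':ℝ) + (B':ℝ) * Real.sqrt 3 = (a + b * Real.sqrt 3) * 5^N := by
        rw [← haN, ← hbN]; ring
      have hApos : 0 < (A':ℝ) + (B':ℝ) * Real.sqrt 3 := by
        rw [hABval]
        exact mul_pos ht (by positivity)
      have hsplit : (A':ℝ) + (B':ℝ) * Real.sqrt 3
          = (5:ℝ)^e * ((C₀:ℝ) + (D₀:ℝ) * Real.sqrt 3) := by
        push_cast [hA', hB']
        ring
      have h5e : (0:ℝ) < 5^e := by positivity
      have hCpos : 0 < (C₀:ℝ) + (D₀:ℝ) * Real.sqrt 3 := by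
        rw [hsplit] at hApos
        nlinarith [hApos, h5e]
      obtain ⟨m, hm⟩ := pell_classify C₀ D₀ hn hCpos
      refine ⟨(e:ℤ) - (N:ℤ), m, ?_⟩
      have key : (a + b * Real.sqrt 3) * 5^N = (5:ℝ)^e * (2 + Real.sqrt 3)^m := by
        rw [← hABval, hsplit, hm]
      rw [zpow_sub₀ (by norm_num : (5:ℝ) ≠ 0), zpow_natCast, zpow_natCast,
        div_mul_eq_mul_div, eq_div_iff (by positivity : (5:ℝ)^N ≠ 0)]
      linarith [key]
    · exact absurd hj (no_neg j A' B')
  · rintro ⟨n, m, rfl⟩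
    have h2s : (0:ℝ) < 2 + Real.sqrt 3 := by nlinarith [sqrt3_nonneg]
    refine ⟨mul_pos (zpow_pos (by norm_num) n) (zpow_pos h2s m), mem_R n m, ?_⟩
    rw [mul_inv, ← zpow_neg, ← zpow_neg]
    exact mem_R (-n) (-m)
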